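/- Let g : ℝ × [0,1] → ℝ be bounded, measurable in x for each fixed ν, and continuous in ν for each fixed x. Set G(ν,x) := ∫_0^ν g(s,x) ds and 𝒥(ψ) := ∫_0^1 ( (1/2)|ψ'(x)|² − G(ψ(x),x) ) dx for ψ ∈ H¹₀([0,1]). Then the minimization problem admits a solution: there exists ψ* ∈ H¹₀([0,1]) such that 𝒥(ψ*) = inf_{ψ ∈ H¹₀([0,1])} 𝒥(ψ). -/

import Mathlib

open MeasureTheory

/-- Membership in `H¹₀([0,1])`: `ψ` vanishes at `0` and `1`, is absolutely continuous on
`[0,1]` (it is the integral of its derivative), and its derivative is square integrable. -/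
def MemH10 (ψ : ℝ → ℝ) : Prop :=
  ψ 0 = 0 ∧ ψ 1 = 0 ∧
    (∀ x ∈ Set.Icc (0 : ℝ) 1, ψ x = ∫ t in Set.Ioc 0 x, deriv ψ t) ∧
    IntegrableOn (fun x => deriv ψ x ^ 2) (Set.Ioo (0 : ℝ) 1)

/-- The energy functional `𝒥(ψ) := ∫_0^1 (½|ψ'(x)|² − G(ψ(x),x)) dx`,
with `G(ν,x) := ∫_0^ν g(s,x) ds`. -/
noncomputable def Jfun (g : ℝ → ℝ → ℝ) (ψ : ℝ → ℝ) : ℝ :=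
  ∫ x in Set.Ioo (0 : ℝ) 1, (1 / 2 * deriv ψ x ^ 2 - ∫ s in (0 : ℝ)..(ψ x), g s x)

/-!
Write `ψ ∈ H¹₀` through its derivative `u = ψ' ∈ L²(0,1)`: then `ψ x = ⟪u, 1_(0,x]⟫`, so
`|ψ x| ≤ ‖u‖`, and `𝒥(ψ) = ½‖u‖² − N(u)` with `N(u) = ∫₀¹ G(ψ(x), x) dx` and `|N(u)| ≤ M‖u‖`.
Hence `𝒥` is bounded below and coercive, and a minimizing sequence has a weakly convergent
subsequence in `L²` (sequential Banach–Alaoglu). Weak convergence of `u` gives pointwise convergence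
of `ψ`, so the condition `ψ(1) = 0` survives in the limit and `N` converges by dominated
convergence, while `‖·‖²` can only drop in a weak limit.
-/

open Set Filter Topology
open scoped RealInnerProductSpace

section Hilbert

variable {H : Type*} [NormedAddCommGroup H] [InnerProductSpace ℝ H]

def WeakTendsto (u : ℕ → H) (w : H) : Prop :=
  ∀ v, Tendsto (fun n => ⟪u n, v⟫) atTop (𝓝 ⟪w, v⟫)

theorem exists_weakTendsto_subseq [CompleteSpace H] [TopologicalSpace.SeparableSpace H]
    {u : ℕ → H} {C : ℝ} (hC : ∀ n, ‖u n‖ ≤ C) :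
    ∃ w φ, StrictMono φ ∧ WeakTendsto (u ∘ φ) w := by
  let T := InnerProductSpace.toDual ℝ H
  have hmem : ∀ n, StrongDual.toWeakDual (T (u n)) ∈
      WeakDual.toStrongDual ⁻¹' Metric.closedBall (0 : StrongDual ℝ H) C := fun n => by
    simpa using hC n
  obtain ⟨f, -, φ, hφ, hf⟩ := WeakDual.isSeqCompact_closedBall ℝ H 0 C hmem
  refine ⟨T.symm (WeakDual.toStrongDual f), φ, hφ, fun v => ?_⟩
  rw [tendsto_iff_forall_eval_tendsto_topDualPairing] at hf
  rw [InnerProductSpace.toDual_symm_apply]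
  exact hf v

theorem norm_sq_le_of_weakTendsto {u : ℕ → H} {w : H} {c : ℝ} (hw : WeakTendsto u w)
    (hc : Tendsto (fun n => ‖u n‖ ^ 2) atTop (𝓝 c)) : ‖w‖ ^ 2 ≤ c := by
  have hle : ∀ n, ⟪u n, w⟫ ≤ ‖u n‖ ^ 2 / 2 + ‖w‖ ^ 2 / 2 := fun n => by
    nlinarith [real_inner_le_norm (u n) w, sq_nonneg (‖u n‖ - ‖w‖)]
  have := le_of_tendsto_of_tendsto' (hw w) ((hc.div_const 2).add_const (‖w‖ ^ 2 / 2)) hle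
  rw [real_inner_self_eq_norm_sq] at this
  linarith

theorem exists_isMinOn_half_norm_sq_sub [CompleteSpace H] [TopologicalSpace.SeparableSpace H]
    {N : H → ℝ} {K : Set H} {M : ℝ} (hK : K.Nonempty)
    (hK_closed : ∀ u w, (∀ n, u n ∈ K) → WeakTendsto u w → w ∈ K)
    (hN_le : ∀ u, |N u| ≤ M * ‖u‖)
    (hN_tendsto : ∀ u w C, (∀ n, ‖u n‖ ≤ C) → WeakTendsto u w →
      Tendsto (fun n => N (u n)) atTop (𝓝 (N w))) :
    ∃ w ∈ K, IsMinOn (fun u => 1 / 2 * ‖u‖ ^ 2 - N u) K w := by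
  set E : H → ℝ := fun u => 1 / 2 * ‖u‖ ^ 2 - N u
  have hE_ge : ∀ u, -M ^ 2 / 2 ≤ E u := fun u => by
    simp only [E]
    nlinarith [(abs_le.1 (hN_le u)).2, sq_nonneg (‖u‖ - M)]
  have hE_coercive : ∀ u, ‖u‖ ^ 2 ≤ 4 * (E u + M ^ 2) := fun u => by
    simp only [E]
    nlinarith [(abs_le.1 (hN_le u)).2, sq_nonneg (‖u‖ - 2 * M)]
  have hbdd : BddBelow (E '' K) := ⟨-M ^ 2 / 2, by rintro _ ⟨u, -, rfl⟩; exact hE_ge u⟩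
  obtain ⟨a, ha_anti, ha_lim, ha_mem⟩ := exists_seq_tendsto_sInf (hK.image E) hbdd
  choose u hu hEu using ha_mem
  set C := √(4 * (a 0 + M ^ 2))
  have hC : ∀ n, ‖u n‖ ≤ C := fun n => Real.le_sqrt_of_sq_le <| by
    have := ha_anti (Nat.zero_le n)
    have := hE_coercive (u n)
    rw [hEu] at this
    linarith
  obtain ⟨w, φ, hφ, hw⟩ := exists_weakTendsto_subseq hC
  have hNw := hN_tendsto _ w C (fun n => hC (φ n)) hw
  have hEuφ : Tendsto (fun n => E (u (φ n))) atTop (𝓝 (sInf (E '' K))) :=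
    (ha_lim.comp hφ.tendsto_atTop).congr fun n => (hEu (φ n)).symm
  have hnorm : Tendsto (fun n => ‖u (φ n)‖ ^ 2) atTop (𝓝 (2 * (sInf (E '' K) + N w))) :=
    ((hEuφ.add hNw).const_mul 2).congr fun n => by simp only [E]; ring
  have hw_le := norm_sq_le_of_weakTendsto hw hnorm
  refine ⟨w, hK_closed _ w (fun n => hu (φ n)) hw, fun v hv => ?_⟩
  calc E w ≤ sInf (E '' K) := by simp only [E]; linarith
    _ ≤ E v := csInf_le hbdd (mem_image_of_mem E hv)

end Hilbert

local notation "μ₁" => (volume.restrict (Ioo (0 : ℝ) 1) : Measure ℝ)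

instance : IsProbabilityMeasure μ₁ := ⟨by simp⟩

instance : TopologicalSpace.SeparableSpace (Lp ℝ 2 μ₁) :=
  have : Fact ((2 : ENNReal) ≠ ⊤) := ⟨ENNReal.ofNat_ne_top⟩
  have : SecondCountableTopology (Lp ℝ 2 μ₁) := Lp.SecondCountableTopology
  inferInstance

theorem L2.norm_sq_eq_integral_sq {α : Type*} [MeasurableSpace α] {μ : Measure α}
    (u : Lp ℝ 2 μ) : ‖u‖ ^ 2 = ∫ x, u x ^ 2 ∂μ := by
  rw [← real_inner_self_eq_norm_sq, L2.inner_def]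
  simp [sq]

section Primitive

/-- The indicator makes `primitive u` depend only on the class of `u` in `L²(0,1)`. -/
noncomputable def primitive (u : ℝ → ℝ) (x : ℝ) : ℝ :=
  ∫ t in 0..x, (Ioo 0 1).indicator u t

theorem primitive_eq_setIntegral (u : ℝ → ℝ) {x : ℝ} (hx : 0 ≤ x) :
    primitive u x = ∫ t in Ioc 0 x, u t ∂μ₁ := by
  rw [primitive, intervalIntegral.integral_of_le hx, integral_indicator measurableSet_Ioo,
    Measure.restrict_restrict measurableSet_Ioo, Measure.restrict_restrict measurableSet_Ioc,
    inter_comm]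

theorem primitive_congr_ae {u v : ℝ → ℝ} (h : u =ᵐ[μ₁] v) :
    primitive u = primitive v := by
  funext x
  refine intervalIntegral.integral_congr_ae ?_
  filter_upwards [(ae_restrict_iff' measurableSet_Ioo).1 h] with t ht _
  by_cases htI : t ∈ Ioo (0 : ℝ) 1
  · simp [indicator_of_mem htI, ht htI]
  · simp [indicator_of_notMem htI]

theorem setIntegral_Ioc_restrict_Ioo (f : ℝ → ℝ) {x : ℝ} (hx : x ≤ 1) :
    ∫ t in Ioc 0 x, f t ∂μ₁ = ∫ t in Ioc 0 x, f t := by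
  rw [Measure.restrict_congr_set Ioo_ae_eq_Ioc, Measure.restrict_restrict measurableSet_Ioc,
    inter_eq_left.2 (Ioc_subset_Ioc_right hx)]

theorem continuous_primitive {u : ℝ → ℝ} (hu : IntegrableOn u (Ioo 0 1)) :
    Continuous (primitive u) :=
  intervalIntegral.continuous_primitive
    (fun _ _ => ((integrable_indicator_iff measurableSet_Ioo).2 hu).intervalIntegrable) 0

theorem deriv_primitive_ae_eq {u : ℝ → ℝ} (hu : IntegrableOn u (Ioo 0 1)) :
    deriv (primitive u) =ᵐ[μ₁] u := by
  have hFTC := LocallyIntegrable.ae_hasDerivAt_integral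
    ((integrable_indicator_iff measurableSet_Ioo).2 hu).locallyIntegrable
  filter_upwards [ae_restrict_of_ae hFTC, ae_restrict_mem measurableSet_Ioo] with x hx hxI
  exact (hx 0).deriv.trans (indicator_of_mem hxI u)

noncomputable def indicatorIoc (x : ℝ) : Lp ℝ 2 μ₁ :=
  indicatorConstLp 2 measurableSet_Ioc (measure_ne_top μ₁ (Ioc 0 x)) 1

theorem norm_indicatorIoc_le (x : ℝ) : ‖indicatorIoc x‖ ≤ 1 := by
  refine norm_indicatorConstLp_le.trans ?_
  have : Measure.real μ₁ (Ioc 0 x) ≤ 1 := measureReal_le_one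
  simpa using Real.rpow_le_one measureReal_nonneg this (by norm_num)

theorem primitive_eq_inner (u : Lp ℝ 2 μ₁) {x : ℝ} (hx : 0 ≤ x) :
    primitive u x = ⟪u, indicatorIoc x⟫ := by
  rw [real_inner_comm, indicatorIoc, L2.inner_indicatorConstLp_one, primitive_eq_setIntegral _ hx]

theorem abs_primitive_le (u : Lp ℝ 2 μ₁) {x : ℝ} (hx : 0 ≤ x) :
    |primitive u x| ≤ ‖u‖ := by
  rw [primitive_eq_inner u hx]
  calc |⟪u, indicatorIoc x⟫| ≤ ‖u‖ * ‖indicatorIoc x‖ := abs_real_inner_le_norm _ _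
    _ ≤ ‖u‖ := mul_le_of_le_one_right (norm_nonneg u) (norm_indicatorIoc_le x)

theorem WeakTendsto.tendsto_primitive {u : ℕ → Lp ℝ 2 μ₁} {w : Lp ℝ 2 μ₁}
    (hw : WeakTendsto u w) {x : ℝ} (hx : 0 ≤ x) :
    Tendsto (fun n => primitive (u n) x) atTop (𝓝 (primitive w x)) := by
  simp only [primitive_eq_inner _ hx]
  exact hw _

end Primitive

section H10

variable {ψ : ℝ → ℝ}

theorem MemH10.memLp_deriv (hψ : MemH10 ψ) : MemLp (deriv ψ) 2 μ₁ :=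
  (memLp_two_iff_integrable_sq (measurable_deriv ψ).aestronglyMeasurable).2 hψ.2.2.2

noncomputable def MemH10.derivLp (hψ : MemH10 ψ) : Lp ℝ 2 μ₁ :=
  hψ.memLp_deriv.toLp (deriv ψ)

theorem MemH10.eqOn_primitive_derivLp (hψ : MemH10 ψ) :
    EqOn ψ (primitive hψ.derivLp) (Icc 0 1) := by
  intro x hx
  rw [MemH10.derivLp, primitive_congr_ae hψ.memLp_deriv.coeFn_toLp,
    primitive_eq_setIntegral _ hx.1,
    setIntegral_Ioc_restrict_Ioo _ hx.2, hψ.2.2.1 x hx]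

theorem memH10_primitive (u : Lp ℝ 2 μ₁) (hu : primitive u 1 = 0) : MemH10 (primitive u) := by
  have hderiv := deriv_primitive_ae_eq ((Lp.memLp u).integrable one_le_two)
  refine ⟨intervalIntegral.integral_same, hu, fun x hx => ?_, ?_⟩
  · rw [primitive_eq_setIntegral _ hx.1, ← setIntegral_Ioc_restrict_Ioo _ hx.2]
    exact integral_congr_ae (ae_restrict_of_ae hderiv.symm)
  · exact (Lp.memLp u).integrable_sq.congr (hderiv.fun_comp (· ^ 2)).symm

theorem derivLp_primitive (u : Lp ℝ 2 μ₁) (hu : primitive u 1 = 0) :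
    (memH10_primitive u hu).derivLp = u :=
  (MemLp.toLp_congr _ (Lp.memLp u)
    (deriv_primitive_ae_eq ((Lp.memLp u).integrable one_le_two))).trans (Lp.toLp_coeFn u _)

end H10

section Potential

variable {g : ℝ → ℝ → ℝ} {M : ℝ}

noncomputable def potential (g : ℝ → ℝ → ℝ) (ν x : ℝ) : ℝ :=
  ∫ s in 0..ν, g s x

noncomputable def potentialEnergy (g : ℝ → ℝ → ℝ) (ψ : ℝ → ℝ) : ℝ :=
  ∫ x, potential g (ψ x) x ∂μ₁

theorem abs_potential_le (hg : ∀ ν x, |g ν x| ≤ M) (ν x : ℝ) :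
    |potential g ν x| ≤ M * |ν| := by
  simpa [potential] using intervalIntegral.norm_integral_le_of_norm_le_const (a := 0) (b := ν)
    (f := fun s => g s x) fun s _ => hg s x

theorem continuous_potential (hg : ∀ x, Continuous fun ν => g ν x) (x : ℝ) :
    Continuous fun ν => potential g ν x :=
  intervalIntegral.continuous_primitive (fun _ _ => (hg x).intervalIntegrable _ _) 0

theorem measurable_potential (hg_meas : ∀ ν, Measurable fun x => g ν x)
    (hg_cont : ∀ x, Continuous fun ν => g ν x) :
    Measurable (Function.uncurry (potential g)) := by
  have hg : Measurable fun p : ℝ × ℝ => g p.2 p.1 :=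
    (measurable_uncurry_of_continuous_of_measurable hg_cont hg_meas).comp measurable_swap
  have hIoc : ∀ a b : ℝ, Measurable fun x => ∫ s in Ioc a b, g s x := fun a b =>
    (hg.stronglyMeasurable.integral_prod_right' (ν := volume.restrict (Ioc a b))).measurable
  exact measurable_uncurry_of_continuous_of_measurable (continuous_potential hg_cont)
    fun ν => (hIoc 0 ν).sub (hIoc ν 0)

theorem norm_potential_primitive_le (hg : ∀ ν x, |g ν x| ≤ M) (u : Lp ℝ 2 μ₁) :
    ∀ᵐ x ∂μ₁, ‖potential g (primitive u x) x‖ ≤ M * ‖u‖ := by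
  have hM : 0 ≤ M := (abs_nonneg _).trans (hg 0 0)
  filter_upwards [ae_restrict_mem measurableSet_Ioo] with x hx
  exact (abs_potential_le hg _ x).trans
    (mul_le_mul_of_nonneg_left (abs_primitive_le u hx.1.le) hM)

theorem integrable_potential_primitive (hg : ∀ ν x, |g ν x| ≤ M)
    (hg_meas : ∀ ν, Measurable fun x => g ν x) (hg_cont : ∀ x, Continuous fun ν => g ν x)
    (u : Lp ℝ 2 μ₁) : Integrable (fun x => potential g (primitive u x) x) μ₁ := by
  have hprim := continuous_primitive ((Lp.memLp u).integrable one_le_two)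
  have hmeas := (measurable_potential hg_meas hg_cont).comp (hprim.measurable.prodMk measurable_id)
  exact (integrable_const (M * ‖u‖)).mono' hmeas.aestronglyMeasurable
    (norm_potential_primitive_le hg u)

theorem abs_potentialEnergy_primitive_le (hg : ∀ ν x, |g ν x| ≤ M) (u : Lp ℝ 2 μ₁) :
    |potentialEnergy g (primitive u)| ≤ M * ‖u‖ := by
  simpa [potentialEnergy] using norm_integral_le_of_norm_le_const (norm_potential_primitive_le hg u)

theorem WeakTendsto.tendsto_potentialEnergy (hg : ∀ ν x, |g ν x| ≤ M)
    (hg_meas : ∀ ν, Measurable fun x => g ν x) (hg_cont : ∀ x, Continuous fun ν => g ν x)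
    {u : ℕ → Lp ℝ 2 μ₁} {w : Lp ℝ 2 μ₁} {C : ℝ} (hC : ∀ n, ‖u n‖ ≤ C)
    (hw : WeakTendsto u w) :
    Tendsto (fun n => potentialEnergy g (primitive (u n))) atTop
      (𝓝 (potentialEnergy g (primitive w))) := by
  have hM : 0 ≤ M := (abs_nonneg _).trans (hg 0 0)
  refine tendsto_integral_of_dominated_convergence (fun _ => M * C)
    (fun n => (integrable_potential_primitive hg hg_meas hg_cont (u n)).aestronglyMeasurable)
    (integrable_const _) (fun n => ?_) ?_
  · filter_upwards [norm_potential_primitive_le hg (u n)] with x hx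
    exact hx.trans (mul_le_mul_of_nonneg_left (hC n) hM)
  · filter_upwards [ae_restrict_mem measurableSet_Ioo] with x hx
    exact ((continuous_potential hg_cont x).tendsto _).comp (hw.tendsto_primitive hx.1.le)

theorem MemH10.jfun_eq_half_norm_sq_sub (hg : ∀ ν x, |g ν x| ≤ M)
    (hg_meas : ∀ ν, Measurable fun x => g ν x) (hg_cont : ∀ x, Continuous fun ν => g ν x)
    {ψ : ℝ → ℝ} (hψ : MemH10 ψ) :
    Jfun g ψ = 1 / 2 * ‖hψ.derivLp‖ ^ 2 - potentialEnergy g (primitive hψ.derivLp) := by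
  have hJ : Jfun g ψ =
      ∫ x, (1 / 2 * deriv ψ x ^ 2 - potential g (primitive hψ.derivLp x) x) ∂μ₁ := by
    refine integral_congr_ae ?_
    filter_upwards [ae_restrict_mem measurableSet_Ioo] with x hx
    rw [hψ.eqOn_primitive_derivLp (Ioo_subset_Icc_self hx)]
    rfl
  have hnorm : ‖hψ.derivLp‖ ^ 2 = ∫ x, deriv ψ x ^ 2 ∂μ₁ := by
    rw [L2.norm_sq_eq_integral_sq]
    exact integral_congr_ae (hψ.memLp_deriv.coeFn_toLp.fun_comp (· ^ 2))
  rw [hJ, integral_sub (hψ.2.2.2.const_mul _)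
    (integrable_potential_primitive hg hg_meas hg_cont _), integral_const_mul, hnorm]
  rfl

end Potential

/-- **Existence of a minimizer for the energy functional:** if `g : ℝ × [0,1] → ℝ` is
bounded, measurable in `x` for each `ν` and continuous in `ν` for each `x`, then `𝒥`
attains its infimum on `H¹₀([0,1])`. -/
theorem exists_minimizer_energy (g : ℝ → ℝ → ℝ) (M : ℝ)
    (hgbdd : ∀ ν x : ℝ, |g ν x| ≤ M)
    (hgmeas : ∀ ν : ℝ, Measurable fun x => g ν x)
    (hgcont : ∀ x : ℝ, Continuous fun ν => g ν x) :
    ∃ ψstar : ℝ → ℝ, MemH10 ψstar ∧ ∀ ψ : ℝ → ℝ, MemH10 ψ → Jfun g ψstar ≤ Jfun g ψ := by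
  obtain ⟨w, hw, hmin⟩ := exists_isMinOn_half_norm_sq_sub
    (N := fun u : Lp ℝ 2 μ₁ => potentialEnergy g (primitive u)) (K := {u | primitive u 1 = 0})
    ⟨0, by simp [primitive_eq_inner]⟩
    (fun u w hu hw => tendsto_nhds_unique (hw.tendsto_primitive zero_le_one)
      (tendsto_const_nhds.congr fun n => (hu n).symm))
    (abs_potentialEnergy_primitive_le hgbdd)
    (fun _ _ _ hC hw => hw.tendsto_potentialEnergy hgbdd hgmeas hgcont hC)
  refine ⟨primitive w, memH10_primitive w hw, fun ψ hψ => ?_⟩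
  have hψK : primitive hψ.derivLp 1 = 0 :=
    (hψ.eqOn_primitive_derivLp (right_mem_Icc.2 zero_le_one)).symm.trans hψ.2.1
  rw [(memH10_primitive w hw).jfun_eq_half_norm_sq_sub hgbdd hgmeas hgcont, derivLp_primitive w hw,
    hψ.jfun_eq_half_norm_sq_sub hgbdd hgmeas hgcont]
  exact isMinOn_iff.1 hmin _ hψK
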